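/- arXiv:2401.06405 — 5 statements merged into one kernel-verified Lean document; each statement's English description precedes it below -/
import Mathlib

section
/- Let n ≥ 2, k ≥ 1, and f : ℤ^k → ℤ an operation. The operator that maps each S ⊆ ℤ^n to ⋈_{1≤i<j≤n} cl_f(π_{i,j}(S)) ⊆ ℤ^n is a closure operator: it is extensive (S ⊆ ⋈_{1≤i<j≤n} cl_f(π_{i,j}(S))), monotone (S₁ ⊆ S₂ implies ⋈ cl_f(π_{i,j}(S₁)) ⊆ ⋈ cl_f(π_{i,j}(S₂))), and idempotent (applying it twice gives the same result as applying it once). -/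
/-- Componentwise closedness of a set of `ι`-indexed integer vectors under a
`k`-ary operation `f : ℤ^k → ℤ`. -/
def CptClosed {k : ℕ} {ι : Type*} (f : (Fin k → ℤ) → ℤ) (S : Set (ι → ℤ)) : Prop :=
  ∀ x : Fin k → ι → ℤ, (∀ l, x l ∈ S) → (fun i => f (fun l => x l i)) ∈ S

/-- `f : ℤ³ → ℤ` is a majority operation. -/
def IsMajorityOp (f : (Fin 3 → ℤ) → ℤ) : Prop :=
  ∀ a b : ℤ, f ![a, a, b] = a ∧ f ![a, b, a] = a ∧ f ![b, a, a] = a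

/-- `S` is closed under some majority operation. -/
def MajClosed {ι : Type*} (S : Set (ι → ℤ)) : Prop :=
  ∃ f : (Fin 3 → ℤ) → ℤ, IsMajorityOp f ∧ CptClosed f S

/-- The projection `π_{i,j}(x) = (x_i, x_j)`. -/
def proj2 {n : ℕ} (i j : Fin n) (x : Fin n → ℤ) : Fin 2 → ℤ := ![x i, x j]

/-- The projection `π_{i,j}(S)`. -/
def projSet {n : ℕ} (i j : Fin n) (S : Set (Fin n → ℤ)) : Set (Fin 2 → ℤ) :=
  proj2 i j '' S

/-- The join `⋈_{1 ≤ i < j ≤ n} F i j`. -/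
def joinPairs {n : ℕ} (F : Fin n → Fin n → Set (Fin 2 → ℤ)) : Set (Fin n → ℤ) :=
  {x | ∀ i j : Fin n, i < j → proj2 i j x ∈ F i j}

/-- The `f`-closure of `S`: the intersection of all `f`-closed supersets of `S`. -/
def clOp {k m : ℕ} (f : (Fin k → ℤ) → ℤ) (S : Set (Fin m → ℤ)) : Set (Fin m → ℤ) :=
  ⋂₀ {T | S ⊆ T ∧ CptClosed f T}

/-- The directed discrete midpoint operation `μ`. -/
def muOp : (Fin 2 → ℤ) → ℤ := fun t =>
  if t 1 ≤ t 0 then ⌈((t 0 + t 1 : ℤ) : ℚ) / 2⌉ else ⌊((t 0 + t 1 : ℤ) : ℚ) / 2⌋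

/-- The operation `g(x,y) = ⌈(x+y)/2⌉`. -/
def ceilAvgOp : (Fin 2 → ℤ) → ℤ := fun t => ⌈((t 0 + t 1 : ℤ) : ℚ) / 2⌉

/-- The operation `h(x,y) = ⌊(x+y)/2⌋`. -/
def floorAvgOp : (Fin 2 → ℤ) → ℤ := fun t => ⌊((t 0 + t 1 : ℤ) : ℚ) / 2⌋

/-- The median operation on three integers. -/
def medianOp : (Fin 3 → ℤ) → ℤ := fun t =>
  max (max (min (t 0) (t 1)) (min (t 1) (t 2))) (min (t 0) (t 2))

/-- The canonical embedding `ℤ^m → ℝ^m`. -/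
def toR {m : ℕ} (z : Fin m → ℤ) : Fin m → ℝ := fun l => (z l : ℝ)

/-- The integer neighborhood `N(x)` of a real vector `x`. -/
def intNbhd {m : ℕ} (x : Fin m → ℝ) : Set (Fin m → ℤ) :=
  {z | ∀ j, |(z j : ℝ) - x j| < 1}

/-- `S` is midpoint-neighbor-closed: for all `x, y ∈ S`, `N((x+y)/2) ⊆ S`. -/
def MidpointNeighborClosed {m : ℕ} (S : Set (Fin m → ℤ)) : Prop :=
  ∀ x ∈ S, ∀ y ∈ S, ∀ z : Fin m → ℤ,
    (∀ j, |(z j : ℝ) - ((x j : ℝ) + (y j : ℝ)) / 2| < 1) → z ∈ S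

/-- `S ⊆ ℤ^m` is integrally convex. -/
def IntegrallyConvex {m : ℕ} (S : Set (Fin m → ℤ)) : Prop :=
  ∀ x : Fin m → ℝ, x ∈ convexHull ℝ (toR '' S) →
    x ∈ convexHull ℝ (toR '' (S ∩ intNbhd x))

/-- The closed convex closure of `T ⊆ ℤ^m` inside `ℝ^m`: the intersection of all
topologically closed convex sets containing `T`. -/
def closedConvexClosure {m : ℕ} (T : Set (Fin m → ℤ)) : Set (Fin m → ℝ) :=
  ⋂₀ {C : Set (Fin m → ℝ) | Convex ℝ C ∧ IsClosed C ∧ toR '' T ⊆ C}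

/-- `S = cl_conv̄(S) ∩ ℤ^m`. -/
def ClosedConvexIntegral {m : ℕ} (S : Set (Fin m → ℤ)) : Prop :=
  S = {z : Fin m → ℤ | toR z ∈ closedConvexClosure S}

/-- All entries of `A` lie in `{0, -1, +1}`. -/
def UnitMatrix {mR n : ℕ} (A : Matrix (Fin mR) (Fin n) ℤ) : Prop :=
  ∀ i j, A i j = 0 ∨ A i j = -1 ∨ A i j = 1

/-- Each row of `A` has at most `c` nonzero entries. -/
def RowSupportLE {mR n : ℕ} (A : Matrix (Fin mR) (Fin n) ℤ) (c : ℕ) : Prop :=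
  ∀ i, {j | A i j ≠ 0}.ncard ≤ c

/-- `S` is representable by a UTVPI system. -/
def RepUTVPI {n : ℕ} (S : Set (Fin n → ℤ)) : Prop :=
  ∃ (mR : ℕ) (A : Matrix (Fin mR) (Fin n) ℤ) (b : Fin mR → ℝ),
    UnitMatrix A ∧ RowSupportLE A 2 ∧
    S = {x | ∀ i, b i ≤ ((∑ j, A i j * x j : ℤ) : ℝ)}

/-- `S` is representable by an SVPI system. -/
def RepSVPI {n : ℕ} (S : Set (Fin n → ℤ)) : Prop :=
  ∃ (mR : ℕ) (A : Matrix (Fin mR) (Fin n) ℤ) (b : Fin mR → ℝ),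
    UnitMatrix A ∧ RowSupportLE A 1 ∧
    S = {x | ∀ i, b i ≤ ((∑ j, A i j * x j : ℤ) : ℝ)}

/-- `S` is representable by a DC system. -/
def RepDC {n : ℕ} (S : Set (Fin n → ℤ)) : Prop :=
  ∃ (mR : ℕ) (A : Matrix (Fin mR) (Fin n) ℤ) (b : Fin mR → ℝ),
    UnitMatrix A ∧
    (∀ i, {j | A i j = 1}.ncard ≤ 1) ∧ (∀ i, {j | A i j = -1}.ncard ≤ 1) ∧
    S = {x | ∀ i, b i ≤ ((∑ j, A i j * x j : ℤ) : ℝ)}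

/-- `S` is representable by a TVPI system with possibly infinitely many inequalities. -/
def RepTVPIInf {n : ℕ} (S : Set (Fin n → ℤ)) : Prop :=
  ∃ (I : Type) (a1 a2 b : I → ℝ) (p q : I → Fin n),
    S = {x | ∀ i : I, b i ≤ a1 i * (x (p i) : ℝ) + a2 i * (x (q i) : ℝ)}

/-- `S` is 2-decomposable: `S = ⋈_{i<j} π_{i,j}(S)`. -/
def TwoDecomposable {ι : Type*} [LinearOrder ι] (S : Set (ι → ℤ)) : Prop :=
  S = {x | ∀ i j : ι, i < j → ∃ s ∈ S, s i = x i ∧ s j = x j}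

/-! Each `cl_f` is a closure operator on `ℤ²`, and projection followed by join is a Galois
connection between subsets of `ℤ^n` and families of subsets of `ℤ²`; the composite
`S ↦ ⋈ cl_f(π_{i,j}(S))` is therefore again a closure operator. The only point needing care is
idempotence: `π_{i,j}` of a join lands inside the `(i,j)`-th factor, which is already `f`-closed. -/

section Closure

variable {k m : ℕ} (f : (Fin k → ℤ) → ℤ)

lemma subset_clOp (S : Set (Fin m → ℤ)) : S ⊆ clOp f S :=
  fun _ hx _ hT => hT.1 hx

lemma cptClosed_clOp (S : Set (Fin m → ℤ)) : CptClosed f (clOp f S) :=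
  fun x hx T hT => hT.2 x fun l => hx l T hT

lemma clOp_subset {S T : Set (Fin m → ℤ)} (hST : S ⊆ T) (hT : CptClosed f T) :
    clOp f S ⊆ T :=
  Set.sInter_subset_of_mem ⟨hST, hT⟩

lemma clOp_mono {S T : Set (Fin m → ℤ)} (hST : S ⊆ T) : clOp f S ⊆ clOp f T :=
  clOp_subset f (hST.trans (subset_clOp f T)) (cptClosed_clOp f T)

lemma clOp_clOp (S : Set (Fin m → ℤ)) : clOp f (clOp f S) = clOp f S :=
  (clOp_subset f subset_rfl (cptClosed_clOp f S)).antisymm (subset_clOp f _)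

end Closure

section Join

variable {n : ℕ}

lemma joinPairs_mono {F G : Fin n → Fin n → Set (Fin 2 → ℤ)}
    (hFG : ∀ i j, i < j → F i j ⊆ G i j) : joinPairs F ⊆ joinPairs G :=
  fun _ hx i j hij => hFG i j hij (hx i j hij)

lemma subset_joinPairs_projSet (S : Set (Fin n → ℤ)) :
    S ⊆ joinPairs (fun i j => projSet i j S) :=
  fun x hx _ _ _ => ⟨x, hx, rfl⟩

lemma projSet_joinPairs_subset {F : Fin n → Fin n → Set (Fin 2 → ℤ)} {i j : Fin n}
    (hij : i < j) : projSet i j (joinPairs F) ⊆ F i j := by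
  rintro _ ⟨x, hx, rfl⟩
  exact hx i j hij

lemma subset_joinPairs_clOp_projSet {k : ℕ} (f : (Fin k → ℤ) → ℤ) (S : Set (Fin n → ℤ)) :
    S ⊆ joinPairs (fun i j => clOp f (projSet i j S)) :=
  (subset_joinPairs_projSet S).trans (joinPairs_mono fun _ _ _ => subset_clOp f _)

end Join

theorem stmt_1_general {n k : ℕ} (f : (Fin k → ℤ) → ℤ) :
    (∀ S : Set (Fin n → ℤ),
      S ⊆ joinPairs (fun i j => clOp f (projSet i j S))) ∧
    (∀ S₁ S₂ : Set (Fin n → ℤ), S₁ ⊆ S₂ →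
      joinPairs (fun i j => clOp f (projSet i j S₁)) ⊆
        joinPairs (fun i j => clOp f (projSet i j S₂))) ∧
    (∀ S : Set (Fin n → ℤ),
      joinPairs (fun i j => clOp f
          (projSet i j (joinPairs (fun i j => clOp f (projSet i j S))))) =
        joinPairs (fun i j => clOp f (projSet i j S))) := by
  refine ⟨subset_joinPairs_clOp_projSet f, ?_, fun S => ?_⟩
  · intro S₁ S₂ hS
    exact joinPairs_mono fun i j _ => clOp_mono f (Set.image_mono hS)
  · refine Set.Subset.antisymm ?_ (subset_joinPairs_clOp_projSet f _)
    refine joinPairs_mono fun i j hij => ?_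
    calc clOp f (projSet i j (joinPairs fun i j => clOp f (projSet i j S)))
        ⊆ clOp f (clOp f (projSet i j S)) := clOp_mono f (projSet_joinPairs_subset hij)
      _ = clOp f (projSet i j S) := clOp_clOp f _

/-- `S ↦ ⋈_{i<j} cl_f(π_{i,j}(S))` is a closure operator:
extensive, monotone and idempotent. -/
theorem stmt_1 {n k : ℕ} (hn : 2 ≤ n) (hk : 1 ≤ k) (f : (Fin k → ℤ) → ℤ) :
    (∀ S : Set (Fin n → ℤ),
      S ⊆ joinPairs (fun i j => clOp f (projSet i j S))) ∧
    (∀ S₁ S₂ : Set (Fin n → ℤ), S₁ ⊆ S₂ →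
      joinPairs (fun i j => clOp f (projSet i j S₁)) ⊆
        joinPairs (fun i j => clOp f (projSet i j S₂))) ∧
    (∀ S : Set (Fin n → ℤ),
      joinPairs (fun i j => clOp f
          (projSet i j (joinPairs (fun i j => clOp f (projSet i j S))))) =
        joinPairs (fun i j => clOp f (projSet i j S))) :=
  stmt_1_general f
end

section
/- Let n ≥ 2 and S ⊆ ℤ^n. Consider the properties: (i) S is closed under some majority operation and S = cl_conv̄(S) ∩ ℤ^n; (ii) S is closed under some majority operation, and for each 1 ≤ i < j ≤ n, π_{i,j}(S) = cl_conv̄(π_{i,j}(S)) ∩ ℤ²; (iii) S = ⋈_{1≤i<j≤n} π_{i,j}(S), and for each 1 ≤ i < j ≤ n, π_{i,j}(S) = cl_conv̄(π_{i,j}(S)) ∩ ℤ²; (iv) S = ⋈_{1≤i<j≤n} (cl_conv̄(π_{i,j}(S)) ∩ ℤ²). Then (ii) ⇔ (iii), (iii) ⇒ (iv), and (iv) ⇒ (i). -/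
/-!
A set closed under a majority operation is the join of its binary projections (Baker–Pixley),
and conversely a join of binary relations closed under the componentwise median is itself
median-closed. The integer points of a convex subset of the plane form such a relation, because the
median of three points of `ℝ²` lies in their convex hull. Finally, the closed convex closure of `S`
projects into the closed convex closures of the projections of `S`, so a set of the form (iv)
contains every integer point of its closed convex closure.
-/

open Set

def med {α : Type*} [LinearOrder α] (a b c : α) : α := max (max (min a b) (min b c)) (min a c)

section Median
variable {α : Type*} [LinearOrder α]

lemma med_comm_left (a b c : α) : med a b c = med b a c := by
  simp only [med]; grind

lemma med_comm_right (a b c : α) : med a b c = med a c b := by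
  simp only [med]; grind

lemma med_eq_of_mem_uIcc {a b c : α} (h : b ∈ uIcc a c) : med a b c = b := by
  simp only [med, mem_uIcc] at *; grind

lemma med_mem_uIcc {a b c w : α} (h : w ∈ uIcc a c) : med a b c ∈ uIcc b w := by
  simp only [med, mem_uIcc] at *; grind

lemma mem_uIcc_or_mem_uIcc_or_mem_uIcc (a b c : α) :
    b ∈ uIcc a c ∨ a ∈ uIcc b c ∨ c ∈ uIcc a b := by
  simp only [mem_uIcc]; grind

end Median

section ConvexMedian
variable {C : Set (Fin 2 → ℝ)} {p q r : Fin 2 → ℝ}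

/- The point `w` of `[p, r]` level with `q` in the first coordinate has its second coordinate
between `p 1` and `r 1`, so the median lies on the segment `[q, w]`. -/
lemma Convex.med_mem_of_mem_uIcc (hC : Convex ℝ C) (hp : p ∈ C) (hq : q ∈ C) (hr : r ∈ C)
    (hq₀ : q 0 ∈ uIcc (p 0) (r 0)) : (fun k => med (p k) (q k) (r k)) ∈ C := by
  obtain ⟨a, b, ha, hb, hab, hw₀⟩ := (segment_eq_uIcc (p 0) (r 0)).symm ▸ hq₀
  set w := a • p + b • r
  have hw₁ : w 1 ∈ uIcc (p 1) (r 1) :=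
    segment_eq_uIcc (p 1) (r 1) ▸ ⟨a, b, ha, hb, hab, by simp [w]⟩
  obtain ⟨c, d, hc, hd, hcd, hm₁⟩ := (segment_eq_uIcc (q 1) (w 1)).symm ▸ med_mem_uIcc hw₁
  have hmed : (fun k => med (p k) (q k) (r k)) = c • q + d • w := by
    funext k
    fin_cases k
    · have hw₀' : w 0 = q 0 := by simpa [w] using hw₀
      simp [med_eq_of_mem_uIcc hq₀, hw₀', ← add_mul, hcd]
    · simpa using hm₁.symm
  exact hmed ▸ hC hq (hC hp hr ha hb hab) hc hd hcd

lemma Convex.med_mem (hC : Convex ℝ C) (hp : p ∈ C) (hq : q ∈ C) (hr : r ∈ C) :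
    (fun k => med (p k) (q k) (r k)) ∈ C := by
  rcases mem_uIcc_or_mem_uIcc_or_mem_uIcc (p 0) (q 0) (r 0) with h | h | h
  · exact hC.med_mem_of_mem_uIcc hp hq hr h
  · simpa only [← med_comm_left] using hC.med_mem_of_mem_uIcc hq hp hr h
  · simpa only [← med_comm_right] using hC.med_mem_of_mem_uIcc hp hr hq h

end ConvexMedian

lemma Convex.cptClosed_medianOp {C : Set (Fin 2 → ℝ)} (hC : Convex ℝ C) :
    CptClosed medianOp {z | toR z ∈ C} := by
  intro x hx
  show toR _ ∈ C
  convert hC.med_mem (hx 0) (hx 1) (hx 2) using 1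
  ext k
  simp only [toR, medianOp, med, Int.cast_max, Int.cast_min]

lemma isMajorityOp_medianOp : IsMajorityOp medianOp := by
  intro a b
  simp [medianOp]

lemma IsMajorityOp.apply_eq_of_two_eq {f : (Fin 3 → ℤ) → ℤ} (hf : IsMajorityOp f) {a b c x : ℤ}
    (h : a = x ∧ b = x ∨ a = x ∧ c = x ∨ b = x ∧ c = x) : f ![a, b, c] = x := by
  rcases h with ⟨rfl, rfl⟩ | ⟨rfl, rfl⟩ | ⟨rfl, rfl⟩
  exacts [(hf _ c).1, (hf _ b).2.1, (hf _ a).2.2]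

section BakerPixley
variable {ι : Type*} {S : Set (ι → ℤ)} {f : (Fin 3 → ℤ) → ℤ}

lemma CptClosed.apply₃_mem (hS : CptClosed f S) {s₁ s₂ s₃ : ι → ℤ}
    (h₁ : s₁ ∈ S) (h₂ : s₂ ∈ S) (h₃ : s₃ ∈ S) : (fun i => f ![s₁ i, s₂ i, s₃ i]) ∈ S := by
  convert hS ![s₁, s₂, s₃] (Fin.forall_fin_succ.2 ⟨h₁, Fin.forall_fin_succ.2 ⟨h₂, by simpa⟩⟩)
    using 3 with i
  ext l
  fin_cases l <;> rfl

/- Baker–Pixley. Majority combines three witnesses agreeing with `x` on `A` minus one of three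
distinct coordinates each, since every coordinate of `A` is missed by at most one of them. -/
theorem CptClosed.exists_eqOn_of_isMajorityOp [DecidableEq ι] (hf : IsMajorityOp f)
    (hS : CptClosed f S) {x : ι → ℤ} (hx : ∀ i j, i ≠ j → ∃ s ∈ S, s i = x i ∧ s j = x j)
    (A : Finset ι) (hA : 2 ≤ A.card) : ∃ s ∈ S, ∀ i ∈ A, s i = x i := by
  induction A using Finset.strongInduction with
  | H A ih =>
  rcases hA.eq_or_lt with hA | hA
  · obtain ⟨i, j, hij, rfl⟩ := Finset.card_eq_two.1 hA.symm
    obtain ⟨s, hs, hi, hj⟩ := hx i j hij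
    exact ⟨s, hs, by simp [hi, hj]⟩
  · obtain ⟨i₁, i₂, i₃, h₁, h₂, h₃, h₁₂, h₁₃, h₂₃⟩ := Finset.two_lt_card_iff.1 hA
    have erase_witness : ∀ k ∈ A, ∃ s ∈ S, ∀ i ∈ A, i ≠ k → s i = x i := fun k hk => by
      obtain ⟨s, hs, hsx⟩ := ih _ (Finset.erase_ssubset hk)
        (by rw [Finset.card_erase_of_mem hk]; omega)
      exact ⟨s, hs, fun i hi hik => hsx i (Finset.mem_erase.2 ⟨hik, hi⟩)⟩
    obtain ⟨s₁, hs₁, e₁⟩ := erase_witness i₁ h₁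
    obtain ⟨s₂, hs₂, e₂⟩ := erase_witness i₂ h₂
    obtain ⟨s₃, hs₃, e₃⟩ := erase_witness i₃ h₃
    refine ⟨_, hS.apply₃_mem hs₁ hs₂ hs₃, fun i hi => hf.apply_eq_of_two_eq ?_⟩
    have := e₁ i hi
    have := e₂ i hi
    have := e₃ i hi
    grind

end BakerPixley

section Join
variable {n : ℕ} {S : Set (Fin n → ℤ)}

lemma joinPairs_congr {F G : Fin n → Fin n → Set (Fin 2 → ℤ)}
    (h : ∀ i j, i < j → F i j = G i j) : joinPairs F = joinPairs G := by
  ext x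
  exact forall₃_congr fun i j hij => by rw [h i j hij]

lemma CptClosed.joinPairs {k : ℕ} {f : (Fin k → ℤ) → ℤ} {F : Fin n → Fin n → Set (Fin 2 → ℤ)}
    (hF : ∀ i j, i < j → CptClosed f (F i j)) : CptClosed f (joinPairs F) := by
  intro x hx i j hij
  convert hF i j hij (fun l => proj2 i j (x l)) fun l => hx l i j hij using 1
  ext m
  fin_cases m <;> rfl

lemma eq_joinPairs_projSet_of_majClosed (hn : 2 ≤ n) (hS : MajClosed S) :
    S = joinPairs fun i j => projSet i j S := by
  refine Subset.antisymm (fun x hx _ _ _ => ⟨x, hx, rfl⟩) fun x hx => ?_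
  obtain ⟨f, hf, hfS⟩ := hS
  have hpair : ∀ i j, i ≠ j → ∃ s ∈ S, s i = x i ∧ s j = x j := by
    intro i j hij
    rcases hij.lt_or_gt with h | h
    · obtain ⟨s, hs, he⟩ := hx i j h
      exact ⟨s, hs, congrFun he 0, congrFun he 1⟩
    · obtain ⟨s, hs, he⟩ := hx j i h
      exact ⟨s, hs, congrFun he 1, congrFun he 0⟩
  obtain ⟨s, hs, hsx⟩ :=
    hfS.exists_eqOn_of_isMajorityOp hf hpair Finset.univ (by simpa using hn)
  exact (funext fun i => hsx i (Finset.mem_univ i)) ▸ hs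

end Join

section ClosedConvexClosure
variable {m n : ℕ}

lemma closedConvexClosure_eq_closedConvexHull (T : Set (Fin m → ℤ)) :
    closedConvexClosure T = closedConvexHull ℝ (toR '' T) :=
  Subset.antisymm
    (sInter_subset_of_mem ⟨convex_closedConvexHull, isClosed_closedConvexHull,
      subset_closedConvexHull⟩)
    (closedConvexHull_min (subset_sInter fun _ hC => hC.2.2) (convex_sInter fun _ hC => hC.1)
      (isClosed_sInter fun _ hC => hC.2.1))

lemma convex_closedConvexClosure (T : Set (Fin m → ℤ)) : Convex ℝ (closedConvexClosure T) :=
  closedConvexClosure_eq_closedConvexHull T ▸ convex_closedConvexHull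

lemma subset_setOf_toR_mem_closedConvexClosure (T : Set (Fin m → ℤ)) :
    T ⊆ {z | toR z ∈ closedConvexClosure T} := fun _ hz =>
  closedConvexClosure_eq_closedConvexHull T ▸ subset_closedConvexHull (mem_image_of_mem toR hz)

lemma toR_proj2_mem_closedConvexClosure {S : Set (Fin n → ℤ)} {z : Fin n → ℤ}
    (hz : toR z ∈ closedConvexClosure S) (i j : Fin n) :
    toR (proj2 i j z) ∈ closedConvexClosure (projSet i j S) := by
  let P : (Fin n → ℝ) →L[ℝ] Fin 2 → ℝ :=
    ContinuousLinearMap.pi ![ContinuousLinearMap.proj i, ContinuousLinearMap.proj j]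
  have hP : ∀ y, P (toR y) = toR (proj2 i j y) := fun y => by
    ext k
    fin_cases k <;> rfl
  rw [closedConvexClosure_eq_closedConvexHull] at hz ⊢
  refine hP z ▸ closedConvexHull_min (t := P ⁻¹' closedConvexHull ℝ (toR '' projSet i j S))
    ?_ (convex_closedConvexHull.linear_preimage P.toLinearMap)
    (isClosed_closedConvexHull.preimage P.continuous) hz
  rintro _ ⟨y, hy, rfl⟩
  rw [mem_preimage, hP]
  exact subset_closedConvexHull ⟨proj2 i j y, ⟨y, hy, rfl⟩, rfl⟩

lemma closedConvexIntegral_of_eq_joinPairs {S : Set (Fin n → ℤ)}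
    (h : S = joinPairs fun i j => {z | toR z ∈ closedConvexClosure (projSet i j S)}) :
    ClosedConvexIntegral S := by
  refine (subset_setOf_toR_mem_closedConvexClosure S).antisymm fun z hz => ?_
  rw [h]
  exact fun i j _ => toR_proj2_mem_closedConvexClosure hz i j

end ClosedConvexClosure

/-- 2-decomposability and the closure property induced by
`cl_conv̄(·) ∩ ℤ^n`: (ii) ⇔ (iii), (iii) ⇒ (iv), (iv) ⇒ (i). -/
theorem stmt_4 {n : ℕ} (hn : 2 ≤ n) (S : Set (Fin n → ℤ)) :
    ((MajClosed S ∧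
        ∀ i j : Fin n, i < j → ClosedConvexIntegral (projSet i j S)) ↔
      (S = joinPairs (fun i j => projSet i j S) ∧
        ∀ i j : Fin n, i < j → ClosedConvexIntegral (projSet i j S))) ∧
    ((S = joinPairs (fun i j => projSet i j S) ∧
        ∀ i j : Fin n, i < j → ClosedConvexIntegral (projSet i j S)) →
      S = joinPairs (fun i j =>
        {z : Fin 2 → ℤ | toR z ∈ closedConvexClosure (projSet i j S)})) ∧
    ((S = joinPairs (fun i j =>
        {z : Fin 2 → ℤ | toR z ∈ closedConvexClosure (projSet i j S)})) →
      (MajClosed S ∧ ClosedConvexIntegral S)) := by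
  have majClosed_convexJoin : MajClosed (joinPairs fun i j =>
      {z : Fin 2 → ℤ | toR z ∈ closedConvexClosure (projSet i j S)}) :=
    ⟨medianOp, isMajorityOp_medianOp,
      CptClosed.joinPairs fun _ _ _ => (convex_closedConvexClosure _).cptClosed_medianOp⟩
  have iii_imp_iv : (S = joinPairs (fun i j => projSet i j S) ∧
      ∀ i j : Fin n, i < j → ClosedConvexIntegral (projSet i j S)) →
      S = joinPairs (fun i j => {z : Fin 2 → ℤ | toR z ∈ closedConvexClosure (projSet i j S)}) :=
    fun ⟨hS, hproj⟩ => hS.trans (joinPairs_congr hproj)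
  refine ⟨⟨fun ⟨hmaj, hproj⟩ => ⟨eq_joinPairs_projSet_of_majClosed hn hmaj, hproj⟩,
    fun h => ⟨iii_imp_iv h ▸ majClosed_convexJoin, h.2⟩⟩, iii_imp_iv,
    fun h => ⟨h ▸ majClosed_convexJoin, closedConvexIntegral_of_eq_joinPairs h⟩⟩
end

section
/- Let n ≥ 2 and S ⊆ ℤ^n. Then S is representable by an SVPI system if and only if S is midpoint-neighbor-closed. -/
open Set

theorem abs_intCast_sub_midpoint_lt_one_iff (x y z : ℤ) :
    |(z : ℝ) - ((x : ℝ) + (y : ℝ)) / 2| < 1 ↔ |2 * z - x - y| ≤ 1 := by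
  rw [show (z : ℝ) - ((x : ℝ) + (y : ℝ)) / 2 = ((2 * z - x - y : ℤ) : ℝ) / 2 by push_cast; ring,
    abs_div, abs_two, div_lt_one two_pos, ← Int.cast_abs]
  norm_cast
  omega

theorem Int.mem_uIcc_of_abs_two_mul_sub_le_one {x y z : ℤ} (h : |2 * z - x - y| ≤ 1) :
    z ∈ uIcc x y := by
  rw [abs_le] at h
  rw [mem_uIcc]
  omega

theorem mul_mem_uIcc {α : Type*} [Ring α] [LinearOrder α] [IsOrderedRing α] {x y z : α} (c : α)
    (hz : z ∈ uIcc x y) : c * z ∈ uIcc (c * x) (c * y) := by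
  rcases le_total 0 c with hc | hc
  · exact (monotone_mul_left_of_nonneg hc).mapsTo_uIcc hz
  · exact (antitone_mul_left hc).mapsTo_uIcc hz

theorem sum_mul_mem_uIcc_of_ncard_support_le_one {ι : Type*} [Fintype ι] {r x y z : ι → ℤ}
    (hr : {j | r j ≠ 0}.ncard ≤ 1) (hz : ∀ j, z j ∈ uIcc (x j) (y j)) :
    ∑ j, r j * z j ∈ uIcc (∑ j, r j * x j) (∑ j, r j * y j) := by
  by_cases hzero : ∀ j, r j = 0
  · simp [hzero]
  obtain ⟨j₀, hj₀⟩ := not_forall.mp hzero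
  have hsingle : ∀ w : ι → ℤ, ∑ j, r j * w j = r j₀ * w j₀ := fun w =>
    Finset.sum_eq_single_of_mem j₀ (Finset.mem_univ j₀) fun j _ hj => by
      rw [not_ne_iff.mp fun h => hj ((ncard_le_one (toFinite _)).mp hr j h j₀ hj₀), zero_mul]
  simp only [hsingle]
  exact mul_mem_uIcc _ (hz j₀)

namespace MidpointNeighborClosed

variable {m : ℕ} {S : Set (Fin m → ℤ)}

theorem mem_of_abs_two_mul_sub_le_one (hS : MidpointNeighborClosed S) {x y z : Fin m → ℤ}
    (hx : x ∈ S) (hy : y ∈ S) (hz : ∀ j, |2 * z j - x j - y j| ≤ 1) : z ∈ S :=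
  hS x hx y hy z fun j => (abs_intCast_sub_midpoint_lt_one_iff _ _ _).mpr (hz j)

/-- Induction on the distance `d`: clamping `z` into the boxes spanned by `x, w` and by `w, y`,
for a midpoint `w`, gives two points `x', y'` of `S` at distance at most `⌈d/2⌉` from each other,
and `z` lies in the box spanned by `x', y'`. -/
theorem mem_of_forall_mem_uIcc_of_abs_sub_le (hS : MidpointNeighborClosed S) (d : ℕ) :
    ∀ x ∈ S, ∀ y ∈ S, (∀ j, |x j - y j| ≤ d) →
      ∀ z : Fin m → ℤ, (∀ j, z j ∈ uIcc (x j) (y j)) → z ∈ S := by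
  induction d using Nat.strong_induction_on with
  | _ d ih =>
    intro x hx y hy hd z hz
    simp only [abs_le, mem_uIcc] at hd hz
    rcases le_or_gt d 1 with hd1 | hd1
    · exact hS.mem_of_abs_two_mul_sub_le_one hx hy fun j => by
        have := hd j; have := hz j; rw [abs_le]; omega
    set w : Fin m → ℤ := fun j => x j + (y j - x j) / 2 with hw_def
    have hw : w ∈ S := hS.mem_of_abs_two_mul_sub_le_one hx hy fun j => by
      have := hd j; simp only [abs_le, hw_def]; omega
    have hlt : (d + 1) / 2 < d := by omega
    set x' : Fin m → ℤ := fun j => max (min (x j) (w j)) (min (z j) (max (x j) (w j))) with hx'_def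
    set y' : Fin m → ℤ := fun j => max (min (w j) (y j)) (min (z j) (max (w j) (y j))) with hy'_def
    have hx' : x' ∈ S := ih _ hlt x hx w hw (fun j => by
        have := hd j; simp only [abs_le, hw_def]; omega) x' fun j => by
      simp only [mem_uIcc, hx'_def, hw_def]; omega
    have hy' : y' ∈ S := ih _ hlt w hw y hy (fun j => by
        have := hd j; simp only [abs_le, hw_def]; omega) y' fun j => by
      simp only [mem_uIcc, hy'_def, hw_def]; omega
    exact ih _ hlt x' hx' y' hy' (fun j => by
        have := hd j; have := hz j; simp only [abs_le, hx'_def, hy'_def, hw_def]; omega) z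
      fun j => by have := hz j; simp only [mem_uIcc, hx'_def, hy'_def, hw_def]; omega

theorem mem_of_forall_mem_uIcc (hS : MidpointNeighborClosed S) {x y z : Fin m → ℤ}
    (hx : x ∈ S) (hy : y ∈ S) (hz : ∀ j, z j ∈ uIcc (x j) (y j)) : z ∈ S := by
  obtain ⟨d, hd⟩ := Finite.exists_le fun j => (x j - y j).natAbs
  exact hS.mem_of_forall_mem_uIcc_of_abs_sub_le d x hx y hy
    (fun j => by rw [Int.abs_eq_natAbs]; exact_mod_cast hd j) z hz

theorem ordConnected_image_eval (hS : MidpointNeighborClosed S) (j : Fin m) :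
    (Function.eval j '' S).OrdConnected := by
  refine ⟨?_⟩
  rintro _ ⟨s, hs, rfl⟩ _ ⟨s', hs', rfl⟩ t ht
  refine ⟨Function.update s j t, hS.mem_of_forall_mem_uIcc hs hs' fun k => ?_, by simp⟩
  rcases eq_or_ne k j with rfl | hk
  · simpa using Icc_subset_uIcc ht
  · simp [hk]

theorem eq_pi_image_eval (hS : MidpointNeighborClosed S) (hne : S.Nonempty) :
    S = univ.pi fun j => Function.eval j '' S := by
  refine Subset.antisymm (fun s hs j _ => ⟨s, hs, rfl⟩) fun x hx => ?_
  have hagree : ∀ F : Finset (Fin m), ∃ w ∈ S, ∀ j ∈ F, w j = x j := by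
    intro F
    induction F using Finset.induction_on with
    | empty => exact ⟨hne.some, hne.some_mem, by simp⟩
    | insert j F _ ih =>
      obtain ⟨w, hw, hwx⟩ := ih
      obtain ⟨s, hs, hsx⟩ := hx j (mem_univ j)
      refine ⟨Function.update w j (x j), hS.mem_of_forall_mem_uIcc hw hs fun k => ?_, ?_⟩
      · rcases eq_or_ne k j with rfl | hk
        · simp [← hsx]
        · simp [hk]
      · intro k hk
        rcases eq_or_ne k j with rfl | hkj
        · simp
        · simpa [hkj] using hwx k (Finset.mem_of_mem_insert_of_ne hk hkj)
  obtain ⟨w, hw, hwx⟩ := hagree Finset.univ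
  rwa [← funext fun j => hwx j (Finset.mem_univ j)]

end MidpointNeighborClosed

theorem Int.exists_upperClosure_eq_setOf_le_mul (I : Set ℤ) :
    ∃ c β : ℤ, (c = 0 ∨ c = 1) ∧ (upperClosure I : Set ℤ) = {t | β ≤ c * t} := by
  rcases I.eq_empty_or_nonempty with rfl | hne
  · exact ⟨0, 1, Or.inl rfl, by simp⟩
  by_cases hbdd : BddBelow I
  · refine ⟨1, sInf I, Or.inr rfl, ?_⟩
    ext t
    simp only [SetLike.mem_coe, mem_upperClosure, mem_ofPred_eq, one_mul]
    exact ⟨fun ⟨a, ha, hat⟩ => (csInf_le hbdd ha).trans hat,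
      fun h => ⟨sInf I, Int.csInf_mem hne hbdd, h⟩⟩
  · refine ⟨0, 0, Or.inl rfl, ?_⟩
    ext t
    obtain ⟨a, ha, hat⟩ := not_bddBelow_iff.mp hbdd t
    simpa using ⟨a, ha, hat.le⟩

theorem Int.exists_lowerClosure_eq_setOf_le_mul (I : Set ℤ) :
    ∃ c β : ℤ, (c = 0 ∨ c = -1) ∧ (lowerClosure I : Set ℤ) = {t | β ≤ c * t} := by
  obtain ⟨c, β, hc, hI⟩ := Int.exists_upperClosure_eq_setOf_le_mul (-I)
  refine ⟨-c, β, by omega, ?_⟩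
  ext t
  have := Set.ext_iff.mp hI (-t)
  simp only [SetLike.mem_coe, mem_upperClosure, mem_lowerClosure, mem_ofPred_eq, mem_neg]
    at this ⊢
  rw [neg_mul, ← mul_neg, ← this]
  exact ⟨fun ⟨b, hb, htb⟩ => ⟨-b, by simpa, by omega⟩, fun ⟨a, ha, hat⟩ => ⟨-a, ha, by omega⟩⟩

theorem Int.exists_eq_setOf_forall_le_mul {I : Set ℤ} (hI : I.OrdConnected) :
    ∃ c β : Fin 2 → ℤ, (∀ s, c s = 0 ∨ c s = -1 ∨ c s = 1) ∧ I = {t | ∀ s, β s ≤ c s * t} := by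
  obtain ⟨c₀, β₀, hc₀, hup⟩ := Int.exists_upperClosure_eq_setOf_le_mul I
  obtain ⟨c₁, β₁, hc₁, hdown⟩ := Int.exists_lowerClosure_eq_setOf_le_mul I
  refine ⟨![c₀, c₁], ![β₀, β₁], Fin.forall_fin_two.mpr ⟨by simp; omega, by simp; omega⟩, ?_⟩
  rw [← hI.upperClosure_inter_lowerClosure, hup, hdown]
  ext t
  simp [Fin.forall_fin_two]

theorem repSVPI_of_fintype {n : ℕ} {ι : Type*} [Fintype ι] (A : ι → Fin n → ℤ) (b : ι → ℝ)
    (hA : ∀ i j, A i j = 0 ∨ A i j = -1 ∨ A i j = 1) (hrow : ∀ i, {j | A i j ≠ 0}.ncard ≤ 1) :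
    RepSVPI {x | ∀ i, b i ≤ ((∑ j, A i j * x j : ℤ) : ℝ)} := by
  let e := Fintype.equivFin ι
  refine ⟨Fintype.card ι, fun i => A (e.symm i), fun i => b (e.symm i), fun i => hA _,
    fun i => hrow _, ?_⟩
  ext x
  exact e.forall_congr_left

theorem repSVPI_empty {n : ℕ} : RepSVPI (∅ : Set (Fin n → ℤ)) := by
  convert repSVPI_of_fintype (n := n) (ι := Unit) (fun _ _ => 0) (fun _ => 1) (by simp)
    (by simp)
  ext x
  simp

theorem repSVPI_pi {n : ℕ} {I : Fin n → Set ℤ} (hI : ∀ j, (I j).OrdConnected) :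
    RepSVPI (univ.pi I) := by
  choose c β hc hIeq using fun j => Int.exists_eq_setOf_forall_le_mul (hI j)
  convert repSVPI_of_fintype (ι := Fin n × Fin 2) (fun p k => if k = p.1 then c p.1 p.2 else 0)
    (fun p => β p.1 p.2) (fun p k => ?_) (fun p => ?_) using 1
  · ext x
    simp only [mem_pi, mem_univ, forall_const, hIeq, mem_ofPred_eq, Fin.forall_fin_two, ite_mul,
      zero_mul, Finset.sum_ite_eq', Finset.mem_univ, if_true, Prod.forall, Int.cast_le]
  · split_ifs
    exacts [hc _ _, Or.inl rfl]
  · refine (ncard_le_ncard (fun k hk => mem_singleton_iff.mpr ?_) (finite_singleton p.1)).trans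
      (ncard_singleton _).le
    by_contra h
    exact hk (if_neg h)

theorem RepSVPI.midpointNeighborClosed {n : ℕ} {S : Set (Fin n → ℤ)} (hS : RepSVPI S) :
    MidpointNeighborClosed S := by
  obtain ⟨mR, A, b, -, hrow, rfl⟩ := hS
  intro x hx y hy z hz i
  have hmem := sum_mul_mem_uIcc_of_ncard_support_le_one (hrow i) fun j =>
    Int.mem_uIcc_of_abs_two_mul_sub_le_one ((abs_intCast_sub_midpoint_lt_one_iff _ _ _).mp (hz j))
  calc b i ≤ min ((∑ j, A i j * x j : ℤ) : ℝ) ((∑ j, A i j * y j : ℤ) : ℝ) := le_min (hx i) (hy i)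
    _ ≤ ((∑ j, A i j * z j : ℤ) : ℝ) := by rw [← Int.cast_min]; exact_mod_cast hmem.1

theorem MidpointNeighborClosed.repSVPI {n : ℕ} {S : Set (Fin n → ℤ)}
    (hS : MidpointNeighborClosed S) : RepSVPI S := by
  rcases S.eq_empty_or_nonempty with rfl | hne
  · exact repSVPI_empty
  · rw [hS.eq_pi_image_eval hne]
    exact repSVPI_pi hS.ordConnected_image_eval

theorem stmt_6_general {n : ℕ} (S : Set (Fin n → ℤ)) :
    RepSVPI S ↔ MidpointNeighborClosed S :=
  ⟨RepSVPI.midpointNeighborClosed, MidpointNeighborClosed.repSVPI⟩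

/-- `S` is representable by an SVPI system iff `S` is
midpoint-neighbor-closed. -/
theorem stmt_6 {n : ℕ} (hn : 2 ≤ n) (S : Set (Fin n → ℤ)) :
    RepSVPI S ↔ MidpointNeighborClosed S :=
  stmt_6_general S
end

section
/- Let n ≥ 2 and S ⊆ ℤ^n. Then S is representable by a TVPI system with possibly infinitely many inequalities if and only if S = ⋈_{1≤i<j≤n} (cl_conv̄(π_{i,j}(S)) ∩ ℤ²). -/
lemma ccc_convex {m : ℕ} (T : Set (Fin m → ℤ)) : Convex ℝ (closedConvexClosure T) :=
  convex_sInter (fun _ hC => hC.1)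

lemma ccc_closed {m : ℕ} (T : Set (Fin m → ℤ)) : IsClosed (closedConvexClosure T) :=
  isClosed_sInter (fun _ hC => hC.2.1)

lemma ccc_subset {m : ℕ} (T : Set (Fin m → ℤ)) : toR '' T ⊆ closedConvexClosure T :=
  fun _ hx _ hC => hC.2.2 hx

lemma halfspace_convex (a1 a2 b : ℝ) : Convex ℝ {y : Fin 2 → ℝ | b ≤ a1 * y 0 + a2 * y 1} :=
  convex_halfSpace_ge ⟨fun x y => by simp [Pi.add_apply]; ring,
    fun c x => by simp [Pi.smul_apply, smul_eq_mul]; ring⟩ b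

lemma halfspace_closed (a1 a2 b : ℝ) : IsClosed {y : Fin 2 → ℝ | b ≤ a1 * y 0 + a2 * y 1} :=
  isClosed_le continuous_const
    ((continuous_const.mul (continuous_apply 0)).add (continuous_const.mul (continuous_apply 1)))

lemma clm_decomp (f : (Fin 2 → ℝ) →L[ℝ] ℝ) (y : Fin 2 → ℝ) :
    f y = y 0 * f (Pi.single 0 1) + y 1 * f (Pi.single 1 1) := by
  have hy : y = y 0 • (Pi.single 0 1 : Fin 2 → ℝ) + y 1 • (Pi.single 1 1 : Fin 2 → ℝ) := by
    funext i; fin_cases i <;> simp [Pi.single_apply]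
  conv_lhs => rw [hy]
  simp [smul_eq_mul]

lemma mem_ccc_iff (T : Set (Fin 2 → ℤ)) (z : Fin 2 → ℤ) :
    toR z ∈ closedConvexClosure T ↔
      ∀ a1 a2 b : ℝ, (∀ w ∈ T, b ≤ a1 * (w 0 : ℝ) + a2 * (w 1 : ℝ)) →
        b ≤ a1 * (z 0 : ℝ) + a2 * (z 1 : ℝ) := by
  constructor
  · intro h a1 a2 b hT
    have hmem : {y : Fin 2 → ℝ | b ≤ a1 * y 0 + a2 * y 1} ∈
        {C : Set (Fin 2 → ℝ) | Convex ℝ C ∧ IsClosed C ∧ toR '' T ⊆ C} := by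
      refine ⟨halfspace_convex a1 a2 b, halfspace_closed a1 a2 b, ?_⟩
      rintro y ⟨w, hw, rfl⟩
      exact hT w hw
    exact h _ hmem
  · intro h
    by_contra hz
    obtain ⟨f, u, hfu, huz⟩ :=
      geometric_hahn_banach_closed_point (ccc_convex T) (ccc_closed T) hz
    have key := h (-(f (Pi.single 0 1))) (-(f (Pi.single 1 1))) (-u) ?_
    · have := clm_decomp f (toR z)
      simp only [toR] at this
      nlinarith [key, huz]
    · intro w hw
      have hwm : toR w ∈ closedConvexClosure T := ccc_subset T ⟨w, hw, rfl⟩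
      have hlt := hfu _ hwm
      have hd := clm_decomp f (toR w)
      simp only [toR] at hd
      nlinarith [hlt, hd]

lemma proj2_zero {n : ℕ} (i j : Fin n) (x : Fin n → ℤ) : proj2 i j x 0 = x i := rfl
lemma proj2_one {n : ℕ} (i j : Fin n) (x : Fin n → ℤ) : proj2 i j x 1 = x j := rfl

/-- The key one-constraint lemma: if a half-plane inequality holds on `projSet i j S`
and `toR z` is in the closed convex closure, then `z` satisfies it too. -/
lemma ccc_halfspace {n : ℕ} (i j : Fin n) (S : Set (Fin n → ℤ)) (a1 a2 b : ℝ)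
    (hT : ∀ s ∈ S, b ≤ a1 * (s i : ℝ) + a2 * (s j : ℝ)) (z : Fin 2 → ℤ)
    (hz : toR z ∈ closedConvexClosure (projSet i j S)) :
    b ≤ a1 * (z 0 : ℝ) + a2 * (z 1 : ℝ) := by
  rw [mem_ccc_iff] at hz
  refine hz a1 a2 b ?_
  rintro w ⟨s, hs, rfl⟩
  simpa [proj2_zero, proj2_one] using hT s hs

/-- `S` is representable by a TVPI system with possibly infinitely many
inequalities iff `S = ⋈_{i<j} (cl_conv̄(π_{i,j}(S)) ∩ ℤ²)`. -/
theorem stmt_9 {n : ℕ} (hn : 2 ≤ n) (S : Set (Fin n → ℤ)) :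
    RepTVPIInf S ↔
      S = joinPairs (fun i j =>
        {z : Fin 2 → ℤ | toR z ∈ closedConvexClosure (projSet i j S)}) := by
  constructor
  · rintro ⟨I, a1, a2, b, p, q, hS⟩
    ext x
    constructor
    · intro hx i j hij
      exact ccc_subset (projSet i j S) ⟨proj2 i j x, ⟨x, hx, rfl⟩, rfl⟩
    · intro hx
      rw [hS]
      intro k
      have hne : ∀ (c : Fin n), ∃ d : Fin n, c ≠ d := by
        have : Nontrivial (Fin n) := Fin.nontrivial_iff_two_le.mpr hn
        intro c
        obtain ⟨d, hd⟩ := exists_ne c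
        exact ⟨d, hd.symm⟩
      rcases lt_trichotomy (p k) (q k) with hlt | heq | hgt
      · have hz := hx (p k) (q k) hlt
        have := ccc_halfspace (p k) (q k) S (a1 k) (a2 k) (b k)
          (fun s hs => by rw [hS] at hs; exact hs k) (proj2 (p k) (q k) x) hz
        simpa [proj2_zero, proj2_one] using this
      · -- p k = q k : single-variable constraint
        obtain ⟨d, hd⟩ := hne (p k)
        rcases lt_or_gt_of_ne hd with hlt | hgt
        · have hz := hx (p k) d hlt
          have := ccc_halfspace (p k) d S (a1 k + a2 k) 0 (b k)
            (fun s hs => by rw [hS] at hs; have := hs k; rw [← heq] at this; push_cast; nlinarith) (proj2 (p k) d x) hz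
          rw [← heq]
          simp only [proj2_zero, proj2_one] at this
          push_cast at this ⊢
          nlinarith
        · have hz := hx d (p k) hgt
          have := ccc_halfspace d (p k) S 0 (a1 k + a2 k) (b k)
            (fun s hs => by rw [hS] at hs; have := hs k; rw [← heq] at this; push_cast; nlinarith) (proj2 d (p k) x) hz
          rw [← heq]
          simp only [proj2_zero, proj2_one] at this
          push_cast at this ⊢
          nlinarith
      · have hz := hx (q k) (p k) hgt
        have := ccc_halfspace (q k) (p k) S (a2 k) (a1 k) (b k)
          (fun s hs => by rw [hS] at hs; have := hs k; linarith) (proj2 (q k) (p k) x) hz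
        simp only [proj2_zero, proj2_one] at this
        linarith
  · intro hS
    refine ⟨{t : (Fin n × Fin n) × (ℝ × ℝ × ℝ) //
        t.1.1 < t.1.2 ∧ ∀ s ∈ S, t.2.2.2 ≤ t.2.1 * (s t.1.1 : ℝ) + t.2.2.1 * (s t.1.2 : ℝ)},
      fun t => t.val.2.1, fun t => t.val.2.2.1, fun t => t.val.2.2.2,
      fun t => t.val.1.1, fun t => t.val.1.2, ?_⟩
    ext x
    constructor
    · intro hx t
      exact t.prop.2 x hx
    · intro hx
      rw [hS]
      intro i j hij
      show toR (proj2 i j x) ∈ closedConvexClosure (projSet i j S)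
      rw [mem_ccc_iff]
      intro a1 a2 b hT
      have hT' : ∀ s ∈ S, b ≤ a1 * (s i : ℝ) + a2 * (s j : ℝ) := by
        intro s hs
        simpa [proj2_zero, proj2_one] using hT (proj2 i j s) ⟨s, hs, rfl⟩
      have := hx ⟨((i, j), (a1, a2, b)), hij, hT'⟩
      simpa [proj2_zero, proj2_one] using this
end

section
/- Let S ⊆ ℤ^n. If S is closed under the directed discrete midpoint operation μ, then S is integrally convex. -/
/-!
Write `x ∈ conv(S)` as a convex combination of points of a finite `μ`-closed set `P` (the points
of `S` in a bounding box of the support), and among all such combinations pick one minimising the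
second moment `∑ₚ wₚ ‖p - x‖²` (a continuous function on a compact set of weights). If some `p` of
positive weight had `|pⱼ - xⱼ| ≥ 1`, the balance `∑ₚ wₚ (pⱼ - xⱼ) = 0` yields `q` of positive
weight on the other side, so `|pⱼ - qⱼ| ≥ 2`. Moving weight `ε` from `p, q` to `μ(p, q), μ(q, p)`
keeps the barycenter, since `μ(a, b) + μ(b, a) = a + b`, and strictly lowers the second moment,
since `|μ(a, b) - μ(b, a)| ≤ min(1, |a - b|)`. So the minimiser is supported on `N(x)`.
-/

open Finset

theorem Int.floor_intCast_div_two (s : ℤ) : ⌊(s : ℚ) / 2⌋ = s / 2 := by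
  exact_mod_cast Rat.floor_intCast_div_natCast s 2

theorem Int.ceil_intCast_div_two (s : ℤ) : ⌈(s : ℚ) / 2⌉ = -(-s / 2) := by
  rw [← Int.floor_intCast_div_two, ← Int.ceil_neg, Int.cast_neg, neg_div, neg_neg]

section Midpoint

lemma muOp_eq (t : Fin 2 → ℤ) :
    muOp t = if t 1 ≤ t 0 then -(-(t 0 + t 1) / 2) else (t 0 + t 1) / 2 := by
  simp only [muOp, Int.floor_intCast_div_two, Int.ceil_intCast_div_two]

lemma le_muOp {c : ℤ} {t : Fin 2 → ℤ} (h0 : c ≤ t 0) (h1 : c ≤ t 1) : c ≤ muOp t := by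
  rw [muOp_eq]
  split_ifs <;> omega

lemma muOp_le {c : ℤ} {t : Fin 2 → ℤ} (h0 : t 0 ≤ c) (h1 : t 1 ≤ c) : muOp t ≤ c := by
  rw [muOp_eq]
  split_ifs <;> omega

lemma muOp_add_muOp_swap (a b : ℤ) : muOp ![a, b] + muOp ![b, a] = a + b := by
  simp only [muOp_eq, Matrix.cons_val_zero, Matrix.cons_val_one, Matrix.cons_val_fin_one]
  split_ifs <;> omega

lemma abs_muOp_sub_muOp_swap_le_one (a b : ℤ) : |muOp ![a, b] - muOp ![b, a]| ≤ 1 := by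
  simp only [muOp_eq, Matrix.cons_val_zero, Matrix.cons_val_one, Matrix.cons_val_fin_one, abs_le]
  split_ifs <;> omega

lemma abs_muOp_sub_muOp_swap_le (a b : ℤ) : |muOp ![a, b] - muOp ![b, a]| ≤ |a - b| := by
  simp only [muOp_eq, Matrix.cons_val_zero, Matrix.cons_val_one, Matrix.cons_val_fin_one,
    abs_eq_max_neg]
  split_ifs <;> omega

lemma sq_sub_add_sq_sub_eq {u v a b : ℝ} (t : ℝ) (h : u + v = a + b) :
    (u - t) ^ 2 + (v - t) ^ 2 = (a - t) ^ 2 + (b - t) ^ 2 + ((u - v) ^ 2 - (a - b) ^ 2) / 2 := by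
  linear_combination ((u + v + a + b) / 2 - 2 * t) * h

lemma muOp_sq_sub_add_le (a b : ℤ) (t : ℝ) :
    ((muOp ![a, b] : ℝ) - t) ^ 2 + ((muOp ![b, a] : ℝ) - t) ^ 2 ≤
      ((a : ℝ) - t) ^ 2 + ((b : ℝ) - t) ^ 2 := by
  have hsq : ((muOp ![a, b] : ℝ) - muOp ![b, a]) ^ 2 ≤ ((a : ℝ) - b) ^ 2 := by
    exact_mod_cast sq_le_sq.2 (abs_muOp_sub_muOp_swap_le a b)
  have hsum : (muOp ![a, b] : ℝ) + muOp ![b, a] = a + b := by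
    exact_mod_cast muOp_add_muOp_swap a b
  rw [sq_sub_add_sq_sub_eq t hsum]
  linarith

lemma muOp_sq_sub_add_lt {a b : ℤ} (t : ℝ) (hab : 2 ≤ |a - b|) :
    ((muOp ![a, b] : ℝ) - t) ^ 2 + ((muOp ![b, a] : ℝ) - t) ^ 2 <
      ((a : ℝ) - t) ^ 2 + ((b : ℝ) - t) ^ 2 := by
  have hsq : ((muOp ![a, b] : ℝ) - muOp ![b, a]) ^ 2 < ((a : ℝ) - b) ^ 2 := by
    exact_mod_cast sq_lt_sq.2 ((abs_muOp_sub_muOp_swap_le_one a b).trans_lt (by omega))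
  have hsum : (muOp ![a, b] : ℝ) + muOp ![b, a] = a + b := by
    exact_mod_cast muOp_add_muOp_swap a b
  rw [sq_sub_add_sq_sub_eq t hsum]
  linarith

end Midpoint

section Closure

variable {ι : Type*}

def muVec (p q : ι → ℤ) : ι → ℤ := fun i => muOp ![p i, q i]

lemma CptClosed.muVec_mem {S : Set (ι → ℤ)} (hS : CptClosed muOp S) {p q : ι → ℤ}
    (hp : p ∈ S) (hq : q ∈ S) : muVec p q ∈ S := by
  convert hS ![p, q] (Fin.forall_fin_two.2 ⟨hp, hq⟩) using 1
  funext i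
  congr 1

lemma CptClosed.inter {k : ℕ} {f : (Fin k → ℤ) → ℤ} {S T : Set (ι → ℤ)} (hS : CptClosed f S)
    (hT : CptClosed f T) : CptClosed f (S ∩ T) :=
  fun x hx => ⟨hS x fun l => (hx l).1, hT x fun l => (hx l).2⟩

lemma cptClosed_muOp_Icc (lo hi : ι → ℤ) : CptClosed muOp (Set.Icc lo hi) :=
  fun _ hx =>
    ⟨fun i => le_muOp ((hx 0).1 i) ((hx 1).1 i), fun i => muOp_le ((hx 0).2 i) ((hx 1).2 i)⟩

end Closure

section Weights

variable {n : ℕ}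

lemma toR_injective : Function.Injective (toR (m := n)) :=
  fun _ _ h => funext fun j => by simpa [toR] using congrFun h j

lemma toR_add_toR_muVec (p q : Fin n → ℤ) :
    toR (muVec p q) + toR (muVec q p) = toR p + toR q :=
  funext fun j => by
    simp only [Pi.add_apply, toR, muVec]
    exact_mod_cast muOp_add_muOp_swap (p j) (q j)

def sqDist (x : Fin n → ℝ) (z : Fin n → ℤ) : ℝ := ∑ j, ((z j : ℝ) - x j) ^ 2

lemma sqDist_muVec_add_lt (x : Fin n → ℝ) {p q : Fin n → ℤ} {j₀ : Fin n}
    (hpq : 2 ≤ |p j₀ - q j₀|) :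
    sqDist x (muVec p q) + sqDist x (muVec q p) < sqDist x p + sqDist x q := by
  simp only [sqDist, ← sum_add_distrib]
  exact sum_lt_sum (fun j _ => muOp_sq_sub_add_le (p j) (q j) (x j))
    ⟨j₀, mem_univ _, muOp_sq_sub_add_lt (x j₀) hpq⟩

def convexWeights (P : Finset (Fin n → ℤ)) (x : Fin n → ℝ) : Set ((Fin n → ℤ) → ℝ) :=
  {w | (∀ p, 0 ≤ w p) ∧ (∀ p ∉ P, w p = 0) ∧ ∑ p ∈ P, w p = 1 ∧ ∑ p ∈ P, w p • toR p = x}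

def secondMoment (P : Finset (Fin n → ℤ)) (x : Fin n → ℝ) (w : (Fin n → ℤ) → ℝ) : ℝ :=
  ∑ p ∈ P, w p * sqDist x p

variable {P : Finset (Fin n → ℤ)} {x : Fin n → ℝ} {w : (Fin n → ℤ) → ℝ}

lemma continuous_secondMoment : Continuous (secondMoment P x) :=
  continuous_finsetSum _ fun p _ => (continuous_apply p).mul continuous_const

lemma isCompact_convexWeights : IsCompact (convexWeights P x) := by
  refine (isCompact_Icc (a := 0) (b := 1)).of_isClosed_subset ?_
    fun w ⟨hw0, hwP, hw1, _⟩ => ⟨hw0, fun p => ?_⟩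
  · have hK : convexWeights P x = (⋂ p, {w | 0 ≤ w p}) ∩ (⋂ p ∈ (P : Set _)ᶜ, {w | w p = 0}) ∩
        {w | ∑ p ∈ P, w p = 1} ∩ {w | ∑ p ∈ P, w p • toR p = x} := by
      ext w
      simp [convexWeights, and_assoc]
    rw [hK]
    refine (((isClosed_iInter fun p => isClosed_le continuous_const (continuous_apply p)).inter
      (isClosed_biInter fun p _ => isClosed_eq (continuous_apply p) continuous_const)).inter
      (isClosed_eq (continuous_finsetSum _ fun p _ => continuous_apply p) continuous_const)).inter
      (isClosed_eq (continuous_finsetSum _ fun p _ => (continuous_apply p).smul continuous_const)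
        continuous_const)
  · by_cases hp : p ∈ P
    · simpa [hw1] using single_le_sum (fun q _ => hw0 q) hp
    · simp [hwP p hp]

lemma convexWeights_nonempty (hx : x ∈ convexHull ℝ (toR '' (P : Set (Fin n → ℤ)))) :
    (convexWeights P x).Nonempty := by
  classical
  rw [← coe_image, mem_convexHull'] at hx
  obtain ⟨v, hv0, hv1, hvx⟩ := hx
  let w : (Fin n → ℤ) → ℝ := fun p => if p ∈ P then v (toR p) else 0
  have hsum {M : Type} [AddCommGroup M] [Module ℝ M] (f : (Fin n → ℝ) → M) :
      ∑ p ∈ P, w p • f (toR p) = ∑ y ∈ P.image toR, v y • f y := by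
    rw [sum_image toR_injective.injOn]
    exact sum_congr rfl fun p hp => by simp [w, hp]
  refine ⟨w, fun p => ?_, fun p hp => if_neg hp, ?_, (hsum id).trans hvx⟩
  · by_cases hp : p ∈ P
    · simpa [w, hp] using hv0 _ (mem_image_of_mem _ hp)
    · simp [w, hp]
  · simpa [hv1] using hsum fun _ => (1 : ℝ)

lemma mem_convexHull_of_mem_convexWeights (hw : w ∈ convexWeights P x)
    (hN : ∀ p ∈ P, 0 < w p → p ∈ intNbhd x) :
    x ∈ convexHull ℝ (toR '' ((P : Set (Fin n → ℤ)) ∩ intNbhd x)) := by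
  obtain ⟨hw0, -, hw1, hwx⟩ := hw
  have hpos : ∀ p ∈ P, w p ≠ 0 → 0 < w p := fun p _ h => (hw0 p).lt_of_ne' h
  rw [← sum_filter_of_ne hpos] at hw1
  have hmem : ∑ p ∈ P with 0 < w p, w p • toR p ∈
      convexHull ℝ (toR '' ((P : Set (Fin n → ℤ)) ∩ intNbhd x)) :=
    convex_convexHull ℝ _ |>.sum_mem (fun p _ => hw0 p) hw1 fun p hp => by
      obtain ⟨hpP, hwp⟩ := mem_filter.1 hp
      exact subset_convexHull ℝ _ ⟨p, ⟨hpP, hN p hpP hwp⟩, rfl⟩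
  rwa [sum_filter_of_ne fun p hp h => hpos p hp (left_ne_zero_of_smul h), hwx] at hmem

end Weights

section Exchange

lemma exists_pos_neg_of_sum_mul_eq_zero {ι : Type*} {s : Finset ι} {w g : ι → ℝ}
    (hw : ∀ i ∈ s, 0 ≤ w i) (hsum : ∑ i ∈ s, w i * g i = 0) {i₀ : ι} (hi₀ : i₀ ∈ s)
    (hpos : 0 < w i₀ * g i₀) : ∃ i ∈ s, 0 < w i ∧ g i < 0 := by
  by_contra! h
  have hterm : ∀ i ∈ s, 0 ≤ w i * g i := fun i hi => by
    rcases (hw i hi).eq_or_lt with h0 | h0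
    · simp [← h0]
    · exact mul_nonneg h0.le (h i hi h0)
  linarith [sum_pos' hterm ⟨i₀, hi₀, hpos⟩]

variable {n : ℕ} {P : Finset (Fin n → ℤ)} {x : Fin n → ℝ} {w : (Fin n → ℤ) → ℝ}

lemma exists_far_partner (hw : w ∈ convexWeights P x) {p : Fin n → ℤ} (hp : p ∈ P)
    (hwp : 0 < w p) {j : Fin n} (hfar : 1 ≤ |(p j : ℝ) - x j|) :
    ∃ q ∈ P, 0 < w q ∧ 2 ≤ |p j - q j| := by
  obtain ⟨hw0, -, hw1, hwx⟩ := hw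
  have hbal : ∑ q ∈ P, w q * ((q j : ℝ) - x j) = 0 := by
    have hj := congrFun hwx j
    simp only [Finset.sum_apply, Pi.smul_apply, toR, smul_eq_mul] at hj
    simp only [mul_sub, sum_sub_distrib, ← sum_mul, hj, hw1, one_mul, sub_self]
  rcases le_abs'.1 hfar with hle | hge
  · obtain ⟨q, hq, hwq, hqx⟩ := exists_pos_neg_of_sum_mul_eq_zero (g := fun q => x j - q j)
      (fun q _ => hw0 q) (by simp only [mul_sub, sum_sub_distrib] at hbal ⊢; linarith) hp
      (mul_pos hwp (by linarith))
    have : p j + 1 < q j := by exact_mod_cast (by linarith : (p j : ℝ) + 1 < q j)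
    exact ⟨q, hq, hwq, le_abs.2 (Or.inr (by omega))⟩
  · obtain ⟨q, hq, hwq, hqx⟩ := exists_pos_neg_of_sum_mul_eq_zero (g := fun q => (q j : ℝ) - x j)
      (fun q _ => hw0 q) hbal hp (mul_pos hwp (by linarith))
    have : q j + 1 < p j := by exact_mod_cast (by linarith : (q j : ℝ) + 1 < p j)
    exact ⟨q, hq, hwq, le_abs.2 (Or.inl (by omega))⟩

lemma sum_exchange_smul {ι M : Type*} [DecidableEq ι] [AddCommGroup M] [Module ℝ M]
    {s : Finset ι} {a b c d : ι} (ha : a ∈ s) (hb : b ∈ s) (hc : c ∈ s) (hd : d ∈ s)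
    (w : ι → ℝ) (ε : ℝ) (f : ι → M) :
    ∑ i ∈ s, (w + ε • (Pi.single a 1 + Pi.single b 1 - Pi.single c 1 - Pi.single d 1) : ι → ℝ) i
        • f i = ∑ i ∈ s, w i • f i + ε • (f a + f b - f c - f d) := by
  simp [add_smul, sub_smul, mul_smul, sum_add_distrib, sum_sub_distrib, Pi.single_apply,
    ite_smul, ha, hb, hc, hd, ← smul_sum]

lemma exists_secondMoment_lt (hP : CptClosed muOp (P : Set (Fin n → ℤ)))
    (hw : w ∈ convexWeights P x) {p : Fin n → ℤ} (hp : p ∈ P) (hwp : 0 < w p)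
    (hpx : p ∉ intNbhd x) :
    ∃ w' ∈ convexWeights P x, secondMoment P x w' < secondMoment P x w := by
  obtain ⟨j, hj⟩ : ∃ j, 1 ≤ |(p j : ℝ) - x j| := by simpa [intNbhd] using hpx
  obtain ⟨q, hq, hwq, hpq⟩ := exists_far_partner hw hp hwp hj
  have hne : p ≠ q := by rintro rfl; simp at hpq
  have hm₁ := hP.muVec_mem hp hq
  have hm₂ := hP.muVec_mem hq hp
  set ε := min (w p) (w q)
  have hε : 0 < ε := lt_min hwp hwq
  obtain ⟨hw0, hwP, hw1, hwx⟩ := hw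
  refine ⟨w + ε • (Pi.single (muVec p q) 1 + Pi.single (muVec q p) 1 - Pi.single p 1 -
    Pi.single q 1), ⟨fun r => ?_, fun r hr => ?_, ?_, ?_⟩, ?_⟩
  · have := hw0 r
    have : ε ≤ w p := min_le_left _ _
    have : ε ≤ w q := min_le_right _ _
    simp only [Pi.add_apply, Pi.smul_apply, Pi.sub_apply, Pi.single_apply, smul_eq_mul]
    split_ifs <;> subst_vars <;> first | contradiction | nlinarith
  · have hr' : ∀ m ∈ P, r ≠ m := fun m hm h => hr (h ▸ hm)
    simp [hwP r hr, hr' _ hm₁, hr' _ hm₂, hr' _ hp, hr' _ hq]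
  · simpa [hw1] using sum_exchange_smul hm₁ hm₂ hp hq w ε fun _ => (1 : ℝ)
  · rw [sum_exchange_smul hm₁ hm₂ hp hq w ε toR, hwx, toR_add_toR_muVec]
    simp
  · have hdrop := mul_neg_of_pos_of_neg hε (sub_neg.2 (sqDist_muVec_add_lt x hpq))
    simp only [secondMoment, ← smul_eq_mul, sum_exchange_smul hm₁ hm₂ hp hq w ε (sqDist x)]
    rw [smul_eq_mul]
    linarith

end Exchange

theorem integrallyConvex_of_finite {n : ℕ} {P : Set (Fin n → ℤ)} (hfin : P.Finite)
    (hP : CptClosed muOp P) : IntegrallyConvex P := by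
  intro x hx
  rw [← hfin.coe_toFinset] at hx hP ⊢
  obtain ⟨w, hw, hmin⟩ := isCompact_convexWeights.exists_isMinOn (convexWeights_nonempty hx)
    continuous_secondMoment.continuousOn
  refine mem_convexHull_of_mem_convexWeights hw fun p hp hwp => ?_
  by_contra hpx
  obtain ⟨w', hw', hlt⟩ := exists_secondMoment_lt hP hw hp hwp hpx
  exact (hmin hw').not_gt hlt

lemma exists_finset_subset_mem_convexHull {n : ℕ} {S : Set (Fin n → ℤ)} {x : Fin n → ℝ}
    (hx : x ∈ convexHull ℝ (toR '' S)) :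
    ∃ t : Finset (Fin n → ℤ), ↑t ⊆ S ∧ x ∈ convexHull ℝ (toR '' (t : Set (Fin n → ℤ))) := by
  classical
  rw [convexHull_eq_union_convexHull_finite_subsets, Set.mem_iUnion₂] at hx
  obtain ⟨u, hu, hxu⟩ := hx
  obtain ⟨t, htS, rfl⟩ := Finset.subset_set_image_iff.1 hu
  exact ⟨t, htS, by rwa [coe_image] at hxu⟩

/-- if `S` is closed under the directed discrete midpoint operation
`μ`, then `S` is integrally convex. -/
theorem stmt_14 {n : ℕ} (S : Set (Fin n → ℤ)) (h : CptClosed muOp S) :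
    IntegrallyConvex S := by
  intro x hx
  obtain ⟨t, htS, hxt⟩ := exists_finset_subset_mem_convexHull hx
  obtain ⟨lo, hlo⟩ := t.bddBelow
  obtain ⟨hi, hhi⟩ := t.bddAbove
  have hfin : (S ∩ Set.Icc lo hi).Finite := (Set.finite_Icc lo hi).subset Set.inter_subset_right
  have htP : (t : Set (Fin n → ℤ)) ⊆ S ∩ Set.Icc lo hi := fun z hz => ⟨htS hz, hlo hz, hhi hz⟩
  have hP := integrallyConvex_of_finite hfin (h.inter (cptClosed_muOp_Icc lo hi)) x
    (convexHull_mono (Set.image_mono htP) hxt)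
  exact convexHull_mono (Set.image_mono (Set.inter_subset_inter_left _ Set.inter_subset_left)) hP
end
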